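/- Let n ≥ 1, v = 4n+2, m = 2n+1, and for i ∈ {0,...,2n} set a_i = i and b_i = i + m in Fin v. Let S be a Steiner triple system on {0,...,2n} together with an orientation of its blocks. Then the sum of (i) the minimal trades (a_{α0} a_{α1} a_{α2} ; b_{α0} b_{α1} b_{α2}) over all 3-element subsets {α0,α1,α2} of {0,...,2n}, and (ii) for each oriented block of S, the directed-edge trades E(i,j) over its three directed edges (i,j), is a (2,3,4n+2)-halving. -/

import Mathlib

/-- A `T(2,3,v)` trade: `f B = 0` unless `|B| = 3`, and every pair is balanced. -/
def isTrade (v : ℕ) (f : Finset (Fin v) → ℤ) : Prop :=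
  (∀ B : Finset (Fin v), B.card ≠ 3 → f B = 0) ∧
  ∀ P : Finset (Fin v), P.card = 2 →
    ∑ B ∈ Finset.univ.filter (fun B : Finset (Fin v) => B.card = 3 ∧ P ⊆ B), f B = 0

/-- A trade is simple if every value lies in `{-1, 0, 1}`. -/
def isSimple (v : ℕ) (f : Finset (Fin v) → ℤ) : Prop :=
  ∀ B : Finset (Fin v), f B = -1 ∨ f B = 0 ∨ f B = 1

/-- The volume of a trade: the sum of its positive entries. -/
def volume (v : ℕ) (f : Finset (Fin v) → ℤ) : ℤ :=
  ∑ B : Finset (Fin v), max (f B) 0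

/-- A `(2,3,v)`-halving: a simple trade taking value `±1` on every 3-subset. -/
def isHalving (v : ℕ) (f : Finset (Fin v) → ℤ) : Prop :=
  isTrade v f ∧ isSimple v f ∧
    ∀ B : Finset (Fin v), B.card = 3 → f B = 1 ∨ f B = -1

/-- The minimal trade `(a₀ a₁ a₂ ; b₀ b₁ b₂)`: it sends each of the eight sets
`{c₀,c₁,c₂}` with `cᵢ ∈ {aᵢ, bᵢ}` to `(-1)^(#{i : cᵢ = bᵢ})` and all other sets to 0. -/
def minimalTrade (v : ℕ) (a b : Fin 3 → Fin v) : Finset (Fin v) → ℤ :=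
  fun B => ∑ s : Fin 3 → Bool,
    (-1 : ℤ) ^ (Finset.univ.filter (fun i => s i = true)).card *
      (if B = Finset.image (fun i => if s i then b i else a i) Finset.univ then 1 else 0)

/-- The directed-edge trade `E(i,j) = 1_{{aᵢ,bᵢ,aⱼ}} + 1_{{aᵢ,bᵢ,bⱼ}} - 1_{{aⱼ,bⱼ,aᵢ}} - 1_{{aⱼ,bⱼ,bᵢ}}`. -/
def edgeTrade (v : ℕ) {ι : Type*} (a b : ι → Fin v) (i j : ι) : Finset (Fin v) → ℤ :=
  fun B => (if B = {a i, b i, a j} then 1 else 0) + (if B = {a i, b i, b j} then 1 else 0)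
    - (if B = {a j, b j, a i} then 1 else 0) - (if B = {a j, b j, b i} then 1 else 0)

/-!
Let `p` send each point to the index of its pair, so that the pairs `{aᵢ, bᵢ}` are the fibres
of `p`. A 3-set `B` either meets three different pairs, or contains a whole pair `{aᵢ, bᵢ}` and
one point of a pair `l ≠ i`.

In the first case every directed-edge trade vanishes at `B`, since each of its four blocks
contains a whole pair, and among the minimal trades only the one on the indices of `B` sees `B`:
`B` is one of its eight transversals, so it takes the value `±1` there. In the second case no
minimal trade sees `B`, while `E(x,y)` is `1` at `B` if `(x,y) = (i,l)`, `-1` if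
`(x,y) = (l,i)` and `0` otherwise; the pair `{i,l}` lies in exactly one block of the Steiner
system, whose orientation runs through it in exactly one direction, so the total is `±1`.

Both parts are trades. A minimal trade is balanced on a pair `P` because flipping the choice at
a coordinate untouched by `P` does not change whether `P` lies in the chosen transversal, but
reverses its sign. The pair sums of a single `E(i,j)` are `+2` on `{aᵢ, bᵢ}`, `-2` on
`{aⱼ, bⱼ}` and `0` on all other pairs, so they cancel around the three directed edges of an
oriented block.
-/

open Finset Function

section Trade
variable {v : ℕ}

def pairSum (f : Finset (Fin v) → ℤ) (P : Finset (Fin v)) : ℤ :=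
  ∑ B ∈ univ.filter (fun B : Finset (Fin v) => B.card = 3 ∧ P ⊆ B), f B

lemma pairSum_indicator {T : Finset (Fin v)} (hT : #T = 3) (P : Finset (Fin v)) :
    pairSum (fun B => if B = T then 1 else 0) P = if P ⊆ T then 1 else 0 := by
  simp [pairSum, hT]

lemma pairSum_add (f g : Finset (Fin v) → ℤ) (P : Finset (Fin v)) :
    pairSum (fun B => f B + g B) P = pairSum f P + pairSum g P :=
  sum_add_distrib

lemma isTrade_add {f g : Finset (Fin v) → ℤ} (hf : isTrade v f) (hg : isTrade v g) :
    isTrade v (fun B => f B + g B) :=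
  ⟨fun B hB => by simp [hf.1 B hB, hg.1 B hB],
    fun P hP => by rw [sum_add_distrib, hf.2 P hP, hg.2 P hP, add_zero]⟩

lemma isTrade_sum {κ : Type*} (s : Finset κ) {f : κ → Finset (Fin v) → ℤ}
    (hf : ∀ i ∈ s, isTrade v (f i)) : isTrade v (fun B => ∑ i ∈ s, f i B) :=
  ⟨fun B hB => sum_eq_zero fun i hi => (hf i hi).1 B hB,
    fun P hP => by rw [sum_comm]; exact sum_eq_zero fun i hi => (hf i hi).2 P hP⟩

lemma isHalving_of_isTrade {f : Finset (Fin v) → ℤ} (hf : isTrade v f)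
    (hval : ∀ B : Finset (Fin v), #B = 3 → f B = 1 ∨ f B = -1) : isHalving v f := by
  refine ⟨hf, fun B => ?_, hval⟩
  by_cases hB : #B = 3
  · rcases hval B hB with h | h <;> simp [h]
  · simp [hf.1 B hB]

end Trade

section SignReversing
variable {κ : Type*} [Fintype κ] [DecidableEq κ]

lemma neg_one_pow_card_update_not (s : κ → Bool) (k : κ) :
    (-1 : ℤ) ^ #{i | update s k (!s k) i = true} = -(-1 : ℤ) ^ #{i | s i = true} := by
  have hsign : ∀ t : κ → Bool,
      (-1 : ℤ) ^ #{i | t i = true} = ∏ i, (if t i then -1 else 1) := fun t => by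
    rw [prod_ite, prod_const_one, prod_const, mul_one]
  rw [hsign, hsign, Fintype.prod_eq_mul_prod_compl k, Fintype.prod_eq_mul_prod_compl k,
    update_self, prod_congr rfl fun i hi => by rw [update_of_ne (by simpa using hi)]]
  cases s k <;> simp

lemma sum_neg_one_pow_card_mul_eq_zero (F : (κ → Bool) → ℤ) (k : κ)
    (hF : ∀ s, F (update s k (!s k)) = F s) :
    ∑ s : κ → Bool, (-1 : ℤ) ^ #{i | s i = true} * F s = 0 := by
  have hinv : Involutive fun s : κ → Bool => update s k (!s k) := fun s => by simp
  have h := Equiv.sum_comp hinv.toPerm fun s => (-1 : ℤ) ^ #{i | s i = true} * F s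
  rw [← add_self_eq_zero]
  nth_rewrite 1 [← h]
  rw [← sum_add_distrib]
  refine sum_eq_zero fun s _ => ?_
  rw [Involutive.coe_toPerm, neg_one_pow_card_update_not, hF]
  ring

end SignReversing

section PairPoint
variable {v : ℕ} {κ : Type*}

def pairPoint (a b : κ → Fin v) (q : κ × Bool) : Fin v := if q.2 then b q.1 else a q.1

variable {a b : κ → Fin v}

lemma injective_pairPoint_iff :
    Injective (pairPoint a b) ↔ Injective a ∧ Injective b ∧ ∀ i j, a i ≠ b j := by
  refine ⟨fun h => ⟨fun i j hij => ?_, fun i j hij => ?_, fun i j hij => ?_⟩, ?_⟩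
  · exact congrArg Prod.fst (@h (i, false) (j, false) hij)
  · exact congrArg Prod.fst (@h (i, true) (j, true) hij)
  · simpa using @h (i, false) (j, true) hij
  · rintro ⟨ha, hb, hab⟩ ⟨i, _ | _⟩ ⟨j, _ | _⟩ h <;>
      simp only [pairPoint, Bool.false_eq_true, if_true, if_false] at h
    · rw [ha h]
    · exact absurd h (hab i j)
    · exact absurd h.symm (hab j i)
    · rw [hb h]

lemma injective_pairPoint_comp {κ' : Type*} (hab : Injective (pairPoint a b)) {e : κ' → κ}
    (he : Injective e) :
    Injective (pairPoint (a ∘ e) (b ∘ e)) :=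
  hab.comp (he.prodMap injective_id)

end PairPoint

section Transversal
variable {v : ℕ} {κ : Type*} [Fintype κ]

def transversal (a b : κ → Fin v) (s : κ → Bool) : Finset (Fin v) :=
  univ.image fun i => if s i then b i else a i

variable {a b : κ → Fin v}

lemma mem_transversal {s : κ → Bool} {x : Fin v} :
    x ∈ transversal a b s ↔ ∃ i, pairPoint a b (i, s i) = x := by
  simp [transversal, pairPoint]

lemma card_transversal (hab : Injective (pairPoint a b)) (s : κ → Bool) :
    #(transversal a b s) = Fintype.card κ :=
  card_image_of_injective _ fun i j hij => congrArg Prod.fst (@hab (i, s i) (j, s j) hij)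

lemma transversal_injective (hab : Injective (pairPoint a b)) : Injective (transversal a b) := by
  intro s t hst
  funext i
  obtain ⟨j, hj⟩ := mem_transversal.mp (hst ▸ mem_transversal.mpr ⟨i, rfl⟩ : _ ∈ transversal a b t)
  obtain ⟨rfl, h⟩ := Prod.ext_iff.mp (hab hj)
  exact h.symm

lemma mem_transversal_update_iff [DecidableEq κ] {s : κ → Bool} {k : κ} {β : Bool} {x : Fin v}
    (hk : ∀ γ, pairPoint a b (k, γ) ≠ x) :
    x ∈ transversal a b (update s k β) ↔ x ∈ transversal a b s := by
  have hne : ∀ (t : κ → Bool) i, pairPoint a b (i, t i) = x → i ≠ k := by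
    rintro t i hi rfl
    exact hk _ hi
  simp only [mem_transversal]
  constructor
  · rintro ⟨i, hi⟩
    exact ⟨i, by rwa [update_of_ne (hne _ i hi)] at hi⟩
  · rintro ⟨i, hi⟩
    exact ⟨i, by rwa [update_of_ne (hne _ i hi)]⟩

lemma exists_pairPoint_notMem (hab : Injective (pairPoint a b)) {P : Finset (Fin v)}
    (hP : #P < Fintype.card κ) : ∃ k, ∀ β, pairPoint a b (k, β) ∉ P := by
  by_contra! hcover
  choose β hβ using hcover
  have := card_le_card_of_injOn (fun k => pairPoint a b (k, β k)) (s := univ)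
    (fun k _ => hβ k) fun i _ j _ hij => congrArg Prod.fst (hab hij)
  simp only [card_univ] at this
  omega

end Transversal

section MinimalTrade
variable {v : ℕ} {a b : Fin 3 → Fin v}

lemma minimalTrade_apply (B : Finset (Fin v)) : minimalTrade v a b B =
    ∑ s : Fin 3 → Bool, (-1 : ℤ) ^ #{i | s i = true} *
      if B = transversal a b s then 1 else 0 := rfl

lemma minimalTrade_transversal (hab : Injective (pairPoint a b)) (c : Fin 3 → Bool) :
    minimalTrade v a b (transversal a b c) = (-1) ^ #{i | c i = true} := by
  rw [minimalTrade_apply, sum_eq_single c (fun s _ hsc => ?_) (by simp)]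
  · simp
  · rw [if_neg fun h => hsc (transversal_injective hab h.symm), mul_zero]

lemma exists_eq_transversal_of_minimalTrade_ne_zero {B : Finset (Fin v)}
    (hB : minimalTrade v a b B ≠ 0) : ∃ c, B = transversal a b c := by
  by_contra! h
  rw [minimalTrade_apply] at hB
  exact hB (sum_eq_zero fun s _ => by rw [if_neg (h s), mul_zero])

lemma minimalTrade_isTrade (hab : Injective (pairPoint a b)) : isTrade v (minimalTrade v a b) := by
  refine ⟨fun B hB => ?_, fun P hP => ?_⟩
  · by_contra h
    obtain ⟨c, rfl⟩ := exists_eq_transversal_of_minimalTrade_ne_zero h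
    exact hB (by simp [card_transversal hab])
  · obtain ⟨k, hk⟩ := exists_pairPoint_notMem hab (P := P) (by simp [hP])
    have hcard : ∀ s, #(transversal a b s) = 3 := fun s => by simp [card_transversal hab]
    have hflip : ∀ s, P ⊆ transversal a b (update s k (!s k)) ↔ P ⊆ transversal a b s :=
      fun s => forall₂_congr fun x hx =>
        mem_transversal_update_iff fun β hβ => hk β (hβ ▸ hx)
    calc pairSum (minimalTrade v a b) P
        = ∑ s : Fin 3 → Bool, (-1 : ℤ) ^ #{i | s i = true} *
            pairSum (fun B => if B = transversal a b s then 1 else 0) P := by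
          simp only [pairSum, minimalTrade_apply, mul_sum]
          exact sum_comm
      _ = ∑ s : Fin 3 → Bool, (-1 : ℤ) ^ #{i | s i = true} *
            if P ⊆ transversal a b s then 1 else 0 := by
          simp only [pairSum_indicator (hcard _)]
      _ = 0 := sum_neg_one_pow_card_mul_eq_zero _ k fun s => if_congr (hflip s) rfl rfl

end MinimalTrade

section EdgeTrade
variable {v : ℕ} {κ : Type*} {a b : κ → Fin v}

lemma card_triple {x y z : Fin v} (hxy : x ≠ y) (hxz : x ≠ z) (hyz : y ≠ z) :
    #({x, y, z} : Finset (Fin v)) = 3 :=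
  card_eq_three.mpr ⟨x, y, z, hxy, hxz, hyz, rfl⟩

variable (hab : Injective (pairPoint a b)) {i j : κ} (hij : i ≠ j)
include hab hij

lemma edgeTrade_eq_zero_of_card_ne_three {B : Finset (Fin v)} (hB : #B ≠ 3) :
    edgeTrade v a b i j B = 0 := by
  obtain ⟨ha, hb, hab⟩ := injective_pairPoint_iff.mp hab
  have hne : ∀ {x y z : Fin v}, x ≠ y → x ≠ z → y ≠ z → B ≠ {x, y, z} :=
    fun hxy hxz hyz h => hB (h ▸ card_triple hxy hxz hyz)
  simp [edgeTrade, hne (hab i i) (ha.ne hij) (hab j i).symm, hne (hab i i) (hab i j) (hb.ne hij),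
    hne (hab j j) (ha.ne hij.symm) (hab i j).symm, hne (hab j j) (hab j i) (hb.ne hij.symm)]

lemma pairSum_edgeTrade {P : Finset (Fin v)} (hP : #P = 2) :
    pairSum (edgeTrade v a b i j) P =
      2 * (if a i ∈ P ∧ b i ∈ P then 1 else 0) - 2 * (if a j ∈ P ∧ b j ∈ P then 1 else 0) := by
  obtain ⟨ha, hb, hab⟩ := injective_pairPoint_iff.mp hab
  have h1 := ha.ne hij
  have h2 := hb.ne hij
  obtain ⟨x, y, hxy, rfl⟩ := card_eq_two.mp hP
  simp only [pairSum, edgeTrade, sum_sub_distrib, sum_add_distrib]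
  simp only [sum_ite_eq', mem_filter, mem_univ, true_and, card_triple (hab i i) h1 (hab j i).symm,
    card_triple (hab i i) (hab i j) h2, card_triple (hab j j) h1.symm (hab i j).symm,
    card_triple (hab j j) (hab j i) h2.symm, insert_subset_iff, singleton_subset_iff,
    mem_insert, mem_singleton]
  split_ifs <;> grind [hab i j, hab j i, hab i i, hab j j]

end EdgeTrade

section OrientedBlock
variable {v : ℕ} {κ : Type*}

def blockTrade (a b : κ → Fin v) (t : κ × κ × κ) (B : Finset (Fin v)) : ℤ :=
  edgeTrade v a b t.1 t.2.1 B + edgeTrade v a b t.2.1 t.2.2 B + edgeTrade v a b t.2.2 t.1 B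

lemma blockTrade_isTrade {a b : κ → Fin v} (hab : Injective (pairPoint a b)) {t : κ × κ × κ}
    (ht : t.1 ≠ t.2.1 ∧ t.1 ≠ t.2.2 ∧ t.2.1 ≠ t.2.2) : isTrade v (blockTrade a b t) := by
  obtain ⟨h12, h13, h23⟩ := ht
  refine ⟨fun B hB => ?_, fun P hP => ?_⟩
  · simp only [blockTrade, edgeTrade_eq_zero_of_card_ne_three hab h12 hB,
      edgeTrade_eq_zero_of_card_ne_three hab h23 hB,
      edgeTrade_eq_zero_of_card_ne_three hab h13.symm hB, add_zero]
  · change pairSum (blockTrade a b t) P = 0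
    unfold blockTrade
    simp only [pairSum_add, pairSum_edgeTrade hab h12 hP, pairSum_edgeTrade hab h23 hP,
      pairSum_edgeTrade hab h13.symm hP]
    ring

end OrientedBlock

section Orientation
variable {κ : Type*} [DecidableEq κ]

def arcSign (i l x y : κ) : ℤ := (if i = x ∧ l = y then 1 else 0) - (if i = y ∧ l = x then 1 else 0)

def blockArcSign (i l : κ) (t : κ × κ × κ) : ℤ :=
  arcSign i l t.1 t.2.1 + arcSign i l t.2.1 t.2.2 + arcSign i l t.2.2 t.1

lemma blockArcSign_eq_zero {i l : κ} {t : κ × κ × κ}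
    (h : ¬ ((i = t.1 ∨ i = t.2.1 ∨ i = t.2.2) ∧ (l = t.1 ∨ l = t.2.1 ∨ l = t.2.2))) :
    blockArcSign i l t = 0 := by
  simp only [blockArcSign, arcSign]
  split_ifs <;> grind

lemma blockArcSign_eq_one_or_neg_one {i l : κ} (hil : i ≠ l) {t : κ × κ × κ}
    (ht : t.1 ≠ t.2.1 ∧ t.1 ≠ t.2.2 ∧ t.2.1 ≠ t.2.2)
    (hi : i = t.1 ∨ i = t.2.1 ∨ i = t.2.2) (hl : l = t.1 ∨ l = t.2.1 ∨ l = t.2.2) :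
    blockArcSign i l t = 1 ∨ blockArcSign i l t = -1 := by
  obtain ⟨x, y, z⟩ := t
  obtain ⟨hxy, hxz, hyz⟩ := ht
  simp only [blockArcSign, arcSign]
  rcases hi with rfl | rfl | rfl <;> rcases hl with rfl | rfl | rfl <;>
    simp_all [eq_comm]

lemma sum_blockArcSign_eq_one_or_neg_one (S : Finset (κ × κ × κ))
    (hSdist : ∀ t ∈ S, t.1 ≠ t.2.1 ∧ t.1 ≠ t.2.2 ∧ t.2.1 ≠ t.2.2)
    (hSsts : ∀ x y : κ, x ≠ y → ∃! t, t ∈ S ∧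
      (x = t.1 ∨ x = t.2.1 ∨ x = t.2.2) ∧ (y = t.1 ∨ y = t.2.1 ∨ y = t.2.2))
    {i l : κ} (hil : i ≠ l) :
    ∑ t ∈ S, blockArcSign i l t = 1 ∨ ∑ t ∈ S, blockArcSign i l t = -1 := by
  obtain ⟨t₀, ⟨ht₀, hi, hl⟩, huniq⟩ := hSsts i l hil
  rw [sum_eq_single_of_mem t₀ ht₀ fun t ht hne =>
    blockArcSign_eq_zero fun ⟨hi, hl⟩ => hne (huniq t ⟨ht, hi, hl⟩)]
  exact blockArcSign_eq_one_or_neg_one hil (hSdist t₀ ht₀) hi hl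

end Orientation

structure IsFiberPairing {v : ℕ} {κ : Type*} (a b : κ → Fin v) (p : Fin v → κ) : Prop where
  fiber_a : ∀ i, p (a i) = i
  fiber_b : ∀ i, p (b i) = i
  a_ne_b : ∀ i, a i ≠ b i
  eq_or_eq : ∀ x, x = a (p x) ∨ x = b (p x)

namespace IsFiberPairing
variable {v : ℕ} {κ : Type*} {a b : κ → Fin v} {p : Fin v → κ} (hp : IsFiberPairing a b p)
include hp

lemma fiber_eq_iff {x : Fin v} {i : κ} : p x = i ↔ x = a i ∨ x = b i := by
  constructor
  · rintro rfl
    exact hp.eq_or_eq x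
  · rintro (rfl | rfl)
    exacts [hp.fiber_a i, hp.fiber_b i]

lemma fiber_pairPoint (q : κ × Bool) : p (pairPoint a b q) = q.1 := by
  unfold pairPoint
  split
  exacts [hp.fiber_b _, hp.fiber_a _]

lemma injective_pairPoint : Injective (pairPoint a b) := by
  refine injective_pairPoint_iff.mpr ⟨fun i j h => ?_, fun i j h => ?_, fun i j h => ?_⟩
  · rw [← hp.fiber_a i, h, hp.fiber_a]
  · rw [← hp.fiber_b i, h, hp.fiber_b]
  · obtain rfl : i = j := by rw [← hp.fiber_a i, h, hp.fiber_b]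
    exact hp.a_ne_b i h

lemma indicator_eq_a_add_indicator_eq_b [DecidableEq κ] (x : Fin v) (i : κ) :
    ((if x = a i then 1 else 0) + (if x = b i then 1 else 0) : ℤ) = if p x = i then 1 else 0 := by
  by_cases hxa : x = a i
  · simp [hxa, hp.a_ne_b i, hp.fiber_a]
  · simp [hxa, hp.fiber_eq_iff]

lemma injOn_or_eq_triple {B : Finset (Fin v)} (hB : #B = 3) :
    Set.InjOn p B ∨ ∃ i w, p w ≠ i ∧ B = {a i, b i, w} := by
  refine or_iff_not_imp_left.mpr fun hinj => ?_
  obtain ⟨x, hx, y, hy, hxy, hne⟩ : ∃ x ∈ B, ∃ y ∈ B, p x = p y ∧ x ≠ y := by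
    simpa [Set.InjOn] using hinj
  obtain ⟨hai, hbi⟩ : a (p x) ∈ B ∧ b (p x) ∈ B := by
    rcases hp.eq_or_eq x with h | h <;> rcases hp.fiber_eq_iff.mp hxy.symm with h' | h' <;>
      first
        | exact absurd (h.trans h'.symm) hne
        | exact ⟨h ▸ hx, h' ▸ hy⟩
        | exact ⟨h' ▸ hy, h ▸ hx⟩
  have hbi' : b (p x) ∈ B.erase (a (p x)) := mem_erase.mpr ⟨(hp.a_ne_b _).symm, hbi⟩
  have hcard : #((B.erase (a (p x))).erase (b (p x))) = 1 := by
    rw [card_erase_of_mem hbi', card_erase_of_mem hai, hB]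
  obtain ⟨w, hw⟩ := card_eq_one.mp hcard
  have hwB : w ∈ (B.erase (a (p x))).erase (b (p x)) := hw ▸ mem_singleton_self w
  refine ⟨p x, w, fun hwx => ?_, ?_⟩
  · rcases hp.fiber_eq_iff.mp hwx with rfl | rfl <;> simp at hwB
  · rw [← insert_erase hai, ← insert_erase hbi', hw]

lemma not_injOn {B : Finset (Fin v)} {i : κ} (hai : a i ∈ B) (hbi : b i ∈ B) :
    ¬ Set.InjOn p B :=
  fun hB => hp.a_ne_b i (hB hai hbi (by rw [hp.fiber_a, hp.fiber_b]))

lemma edgeTrade_eq_zero_of_injOn {B : Finset (Fin v)} (hB : Set.InjOn p B) (x y : κ) :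
    edgeTrade v a b x y B = 0 := by
  have hne : ∀ (i : κ) (w : Fin v), B ≠ {a i, b i, w} := by
    rintro i w rfl
    exact hp.not_injOn (i := i) (by simp) (by simp) hB
  simp [edgeTrade, hne]

lemma triple_eq_triple_iff {i l : κ} {w u : Fin v} (hw : p w ≠ i) (hu : p u ≠ l) :
    ({a i, b i, w} : Finset (Fin v)) = {a l, b l, u} ↔ i = l ∧ w = u := by
  refine ⟨fun h => ?_, by rintro ⟨rfl, rfl⟩; rfl⟩
  have mem : ∀ x, x ∈ ({a l, b l, u} : Finset (Fin v)) → x = w ∨ p x = i := by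
    intro x hx
    rw [← h] at hx
    simp only [mem_insert, mem_singleton] at hx
    rcases hx with rfl | rfl | rfl
    exacts [Or.inr (hp.fiber_a i), Or.inr (hp.fiber_b i), Or.inl rfl]
  obtain rfl : i = l := by
    by_contra hil
    rcases mem (a l) (by simp) with ha | ha <;> rcases mem (b l) (by simp) with hb | hb
    · exact hp.a_ne_b l (ha.trans hb.symm)
    all_goals simp_all [hp.fiber_a, hp.fiber_b]
  refine ⟨rfl, ?_⟩
  rcases mem u (by simp) with h | h
  exacts [h.symm, absurd h hu]

lemma edgeTrade_triple [DecidableEq κ] {i x y : κ} {w : Fin v} (hw : p w ≠ i) (hxy : x ≠ y) :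
    edgeTrade v a b x y {a i, b i, w} = arcSign i (p w) x y := by
  have hhalf : ∀ {x y : κ}, x ≠ y →
      ((if ({a i, b i, w} : Finset (Fin v)) = {a x, b x, a y} then 1 else 0) +
        (if ({a i, b i, w} : Finset (Fin v)) = {a x, b x, b y} then 1 else 0) : ℤ) =
      if i = x ∧ p w = y then 1 else 0 := by
    intro x y hxy
    rw [if_congr (hp.triple_eq_triple_iff hw (by rwa [hp.fiber_a, ne_comm])) rfl rfl,
      if_congr (hp.triple_eq_triple_iff hw (by rwa [hp.fiber_b, ne_comm])) rfl rfl,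
      ite_and, ite_and, ite_and]
    by_cases hix : i = x
    · simp only [hix, if_true]
      exact hp.indicator_eq_a_add_indicator_eq_b w y
    · simp [hix]
  simp only [edgeTrade, arcSign, sub_sub, hhalf hxy, hhalf hxy.symm]

end IsFiberPairing

namespace IsFiberPairing
variable {v : ℕ} {κ : Type*} {a b : κ → Fin v} {p : Fin v → κ} (hp : IsFiberPairing a b p)
include hp

lemma injOn_transversal {κ' : Type*} [Fintype κ'] {e : κ' → κ} (he : Injective e)
    (c : κ' → Bool) : Set.InjOn p (transversal (a ∘ e) (b ∘ e) c) := by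
  intro x hx y hy hxy
  obtain ⟨k, rfl⟩ := mem_transversal.mp hx
  obtain ⟨l, rfl⟩ := mem_transversal.mp hy
  rw [he ((hp.fiber_pairPoint (e k, c k)).symm.trans (hxy.trans (hp.fiber_pairPoint (e l, c l))))]

lemma image_transversal [DecidableEq κ] {κ' : Type*} [Fintype κ'] (e : κ' → κ) (c : κ' → Bool) :
    (transversal (a ∘ e) (b ∘ e) c).image p = univ.image e := by
  simp only [transversal, image_image]
  congr 1
  funext k
  exact hp.fiber_pairPoint (e k, c k)

lemma exists_eq_transversal {κ' : Type*} [Fintype κ'] {e : κ' → κ} (he : Injective e)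
    {B : Finset (Fin v)} (hB : #B ≤ Fintype.card κ') (hcover : ∀ k, ∃ x ∈ B, p x = e k) :
    ∃ c, B = transversal (a ∘ e) (b ∘ e) c := by
  classical
  refine ⟨fun k => decide (b (e k) ∈ B), (eq_of_subset_of_card_le (fun x hx => ?_) ?_).symm⟩
  · obtain ⟨k, rfl⟩ := mem_transversal.mp hx
    obtain ⟨y, hy, hyk⟩ := hcover k
    by_cases hb : b (e k) ∈ B
    · simp [pairPoint, hb]
    · rcases hp.fiber_eq_iff.mp hyk with rfl | rfl
      · simpa [pairPoint, hb]
      · exact absurd hy hb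
  · rwa [card_transversal (injective_pairPoint_comp hp.injective_pairPoint he)]

end IsFiberPairing

section StsHalving
variable {v : ℕ} {κ : Type*} [Fintype κ] [LinearOrder κ]

def tripleEmb (s : {s : Finset κ // s ∈ (univ : Finset κ).powersetCard 3}) (k : Fin 3) : κ :=
  s.1.orderIsoOfFin (mem_powersetCard.mp s.2).2 k

lemma tripleEmb_injective (s : {s : Finset κ // s ∈ (univ : Finset κ).powersetCard 3}) :
    Injective (tripleEmb s) :=
  fun _ _ h => (s.1.orderIsoOfFin _).injective (Subtype.ext h)

lemma image_tripleEmb (s : {s : Finset κ // s ∈ (univ : Finset κ).powersetCard 3}) :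
    univ.image (tripleEmb s) = s.1 :=
  image_orderEmbOfFin_univ _ (mem_powersetCard.mp s.2).2

def minimalTradeSum (a b : κ → Fin v) (B : Finset (Fin v)) : ℤ :=
  ∑ s ∈ ((univ : Finset κ).powersetCard 3).attach,
    minimalTrade v (a ∘ tripleEmb s) (b ∘ tripleEmb s) B

def stsHalving (a b : κ → Fin v) (S : Finset (κ × κ × κ)) (B : Finset (Fin v)) : ℤ :=
  minimalTradeSum a b B + ∑ t ∈ S, blockTrade a b t B

lemma isTrade_stsHalving {a b : κ → Fin v} (hab : Injective (pairPoint a b))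
    {S : Finset (κ × κ × κ)} (hSdist : ∀ t ∈ S, t.1 ≠ t.2.1 ∧ t.1 ≠ t.2.2 ∧ t.2.1 ≠ t.2.2) :
    isTrade v (stsHalving a b S) :=
  isTrade_add
    (isTrade_sum _ fun s _ =>
      minimalTrade_isTrade (injective_pairPoint_comp hab (tripleEmb_injective s)))
    (isTrade_sum _ fun t ht => blockTrade_isTrade hab (hSdist t ht))

end StsHalving

namespace IsFiberPairing
variable {v : ℕ} {κ : Type*} [Fintype κ] [LinearOrder κ] {a b : κ → Fin v} {p : Fin v → κ}
  (hp : IsFiberPairing a b p)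
include hp

lemma minimalTradeSum_eq_zero_of_not_injOn {B : Finset (Fin v)} (hB : ¬ Set.InjOn p B) :
    minimalTradeSum a b B = 0 := by
  refine sum_eq_zero fun s _ => ?_
  by_contra h
  obtain ⟨c, rfl⟩ := exists_eq_transversal_of_minimalTrade_ne_zero h
  exact hB (hp.injOn_transversal (tripleEmb_injective s) c)

lemma minimalTradeSum_eq_one_or_neg_one {B : Finset (Fin v)} (hB3 : #B = 3)
    (hB : Set.InjOn p B) : minimalTradeSum a b B = 1 ∨ minimalTradeSum a b B = -1 := by
  classical
  let s₀ : {s : Finset κ // s ∈ (univ : Finset κ).powersetCard 3} :=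
    ⟨B.image p, mem_powersetCard.mpr ⟨subset_univ _, by rw [card_image_of_injOn hB, hB3]⟩⟩
  have honly : ∀ s, minimalTrade v (a ∘ tripleEmb s) (b ∘ tripleEmb s) B ≠ 0 → s = s₀ := by
    intro s hs
    obtain ⟨c, rfl⟩ := exists_eq_transversal_of_minimalTrade_ne_zero hs
    exact Subtype.ext (by simp [s₀, hp.image_transversal, image_tripleEmb])
  rw [minimalTradeSum, sum_eq_single_of_mem s₀ (mem_attach _ _) fun s _ hne =>
    not_not.mp (mt (honly s) hne)]
  have hcover : ∀ k, ∃ x ∈ B, p x = tripleEmb s₀ k := by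
    intro k
    have hk : tripleEmb s₀ k ∈ s₀.1 := image_tripleEmb s₀ ▸ mem_image_of_mem _ (mem_univ k)
    simpa [s₀] using hk
  obtain ⟨c, hc⟩ := hp.exists_eq_transversal (tripleEmb_injective s₀) (by simp [hB3]) hcover
  rw [hc, minimalTrade_transversal
    (injective_pairPoint_comp hp.injective_pairPoint (tripleEmb_injective s₀))]
  exact neg_one_pow_eq_or ℤ _

lemma stsHalving_eq_one_or_neg_one {S : Finset (κ × κ × κ)}
    (hSdist : ∀ t ∈ S, t.1 ≠ t.2.1 ∧ t.1 ≠ t.2.2 ∧ t.2.1 ≠ t.2.2)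
    (hSsts : ∀ x y : κ, x ≠ y → ∃! t, t ∈ S ∧
      (x = t.1 ∨ x = t.2.1 ∨ x = t.2.2) ∧ (y = t.1 ∨ y = t.2.1 ∨ y = t.2.2))
    {B : Finset (Fin v)} (hB : #B = 3) :
    stsHalving a b S B = 1 ∨ stsHalving a b S B = -1 := by
  rw [stsHalving]
  rcases hp.injOn_or_eq_triple hB with hinj | ⟨i, w, hw, rfl⟩
  · have hedge : ∑ t ∈ S, blockTrade a b t B = 0 := sum_eq_zero fun t _ => by
      simp only [blockTrade, hp.edgeTrade_eq_zero_of_injOn hinj, add_zero]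
    rw [hedge, add_zero]
    exact hp.minimalTradeSum_eq_one_or_neg_one hB hinj
  · have hedge : ∑ t ∈ S, blockTrade a b t {a i, b i, w} = ∑ t ∈ S, blockArcSign i (p w) t :=
      sum_congr rfl fun t ht => by
        obtain ⟨h12, h13, h23⟩ := hSdist t ht
        simp only [blockTrade, blockArcSign, hp.edgeTrade_triple hw h12,
          hp.edgeTrade_triple hw h23, hp.edgeTrade_triple hw h13.symm]
    rw [hp.minimalTradeSum_eq_zero_of_not_injOn (hp.not_injOn (i := i) (by simp) (by simp)),
      zero_add, hedge]
    exact sum_blockArcSign_eq_one_or_neg_one S hSdist hSsts (Ne.symm hw)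

theorem isHalving_stsHalving (S : Finset (κ × κ × κ))
    (hSdist : ∀ t ∈ S, t.1 ≠ t.2.1 ∧ t.1 ≠ t.2.2 ∧ t.2.1 ≠ t.2.2)
    (hSsts : ∀ x y : κ, x ≠ y → ∃! t, t ∈ S ∧
      (x = t.1 ∨ x = t.2.1 ∨ x = t.2.2) ∧ (y = t.1 ∨ y = t.2.1 ∨ y = t.2.2)) :
    isHalving v (stsHalving a b S) :=
  isHalving_of_isTrade (isTrade_stsHalving hp.injective_pairPoint hSdist) fun _ hB =>
    hp.stsHalving_eq_one_or_neg_one hSdist hSsts hB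

end IsFiberPairing

lemma isFiberPairing_mod {m v : ℕ} (hm : 0 < m) (hv : v = 2 * m) {a b : Fin m → Fin v}
    (ha : ∀ i : Fin m, (a i : ℕ) = i) (hb : ∀ i : Fin m, (b i : ℕ) = i + m) :
    IsFiberPairing a b fun x => ⟨x % m, Nat.mod_lt _ hm⟩ where
  fiber_a i := Fin.ext (by simp [ha, Nat.mod_eq_of_lt i.isLt])
  fiber_b i := Fin.ext (by simp [hb, Nat.mod_eq_of_lt i.isLt])
  a_ne_b i hab := by
    have := congrArg Fin.val hab
    rw [ha, hb] at this
    omega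
  eq_or_eq x := by
    by_cases hx : (x : ℕ) < m
    · exact Or.inl (Fin.ext (by simp [ha, Nat.mod_eq_of_lt hx]))
    · refine Or.inr (Fin.ext ?_)
      have hxv : (x : ℕ) < 2 * m := hv ▸ x.isLt
      have hmod : (x : ℕ) % m = x - m := by
        rw [Nat.mod_eq_sub_mod (not_lt.mp hx), Nat.mod_eq_of_lt (by omega)]
      simp only [hb, hmod]
      omega

theorem sts_partition_halving_general
    (n : ℕ) (v m : ℕ) (hv : v = 4 * n + 2) (hm : m = 2 * n + 1)
    (a b : Fin m → Fin v)
    (ha : ∀ i : Fin m, (a i : ℕ) = (i : ℕ)) (hb : ∀ i : Fin m, (b i : ℕ) = (i : ℕ) + m)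
    (S : Finset (Fin m × Fin m × Fin m))
    (hSdist : ∀ t ∈ S, t.1 ≠ t.2.1 ∧ t.1 ≠ t.2.2 ∧ t.2.1 ≠ t.2.2)
    (hSsts : ∀ x y : Fin m, x ≠ y → ∃! t, t ∈ S ∧
      (x = t.1 ∨ x = t.2.1 ∨ x = t.2.2) ∧ (y = t.1 ∨ y = t.2.1 ∨ y = t.2.2))
    (h : Finset (Fin v) → ℤ)
    (hh : h = fun B =>
      (∑ s ∈ ((Finset.univ : Finset (Fin m)).powersetCard 3).attach,
        minimalTrade v
          (fun k => a ((s.1.orderIsoOfFin (Finset.mem_powersetCard.mp s.2).2) k))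
          (fun k => b ((s.1.orderIsoOfFin (Finset.mem_powersetCard.mp s.2).2) k)) B) +
      ∑ t ∈ S, (edgeTrade v a b t.1 t.2.1 B + edgeTrade v a b t.2.1 t.2.2 B +
        edgeTrade v a b t.2.2 t.1 B)) :
    isHalving v h :=
  hh ▸ (isFiberPairing_mod (by omega) (by omega) ha hb).isHalving_stsHalving S hSdist hSsts

/-- For `n ≥ 1`, `v = 4n+2`, `m = 2n+1`, `aᵢ = i`, `bᵢ = i + m`, and an oriented
Steiner triple system `S` on `{0,…,2n}`, the sum of (i) the minimal trades
`(a_{α₀} a_{α₁} a_{α₂} ; b_{α₀} b_{α₁} b_{α₂})` over all 3-subsets `{α₀,α₁,α₂}` of `{0,…,2n}`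
and (ii) the directed-edge trades over the directed edges of the oriented blocks of `S`,
is a `(2,3,4n+2)`-halving. -/
theorem sts_partition_halving
    (n : ℕ) (hn : 1 ≤ n) (v m : ℕ) (hv : v = 4 * n + 2) (hm : m = 2 * n + 1)
    (a b : Fin m → Fin v)
    (ha : ∀ i : Fin m, (a i : ℕ) = (i : ℕ)) (hb : ∀ i : Fin m, (b i : ℕ) = (i : ℕ) + m)
    (S : Finset (Fin m × Fin m × Fin m))
    (hSdist : ∀ t ∈ S, t.1 ≠ t.2.1 ∧ t.1 ≠ t.2.2 ∧ t.2.1 ≠ t.2.2)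
    (hSsts : ∀ x y : Fin m, x ≠ y → ∃! t, t ∈ S ∧
      (x = t.1 ∨ x = t.2.1 ∨ x = t.2.2) ∧ (y = t.1 ∨ y = t.2.1 ∨ y = t.2.2))
    (h : Finset (Fin v) → ℤ)
    (hh : h = fun B =>
      (∑ s ∈ ((Finset.univ : Finset (Fin m)).powersetCard 3).attach,
        minimalTrade v
          (fun k => a ((s.1.orderIsoOfFin (Finset.mem_powersetCard.mp s.2).2) k))
          (fun k => b ((s.1.orderIsoOfFin (Finset.mem_powersetCard.mp s.2).2) k)) B) +
      ∑ t ∈ S, (edgeTrade v a b t.1 t.2.1 B + edgeTrade v a b t.2.1 t.2.2 B +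
        edgeTrade v a b t.2.2 t.1 B)) :
    isHalving v h :=
  sts_partition_halving_general n v m hv hm a b ha hb S hSdist hSsts h hh
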